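/- arXiv:0908.3714 — 2 statements merged into one kernel-verified Lean document; each statement's English description precedes it below -/
import Mathlib

section
/- (Algebraic Littlewood–Richardson formula.) Let k be a field, H a Hopf algebra over k with antipode S, and B = (L_λ)_{λ ∈ P} a k-basis of H with multiplication structure constants b^ν_{λ,μ} and coproduct structure constants c^ν_{λ,μ}. Assume: (1) there are functions e : P → ℕ and T : P → P such that S(L_ρ) = (−1)^{e(ρ)}·L_{T(ρ)} for all ρ ∈ P; and (2) for each ν, μ ∈ P the set {λ ∈ P : b^ν_{λ,μ} ≠ 0} is finite. Then for all λ, μ, σ, τ ∈ P, the product of skew elements satisfies L_{μ/λ}·L_{τ/σ} = Σ_{π,ρ,λ⁻,μ⁺} (−1)^{e(ρ)}·c^τ_{π,ρ,σ}·b^λ_{λ⁻,T(ρ)}·b^{μ⁺}_{μ,π}·L_{μ⁺/λ⁻}, where the sum is over π, ρ, λ⁻, μ⁺ ∈ P and is finite: (π,ρ) ranges over the finite support of (π,ρ) ↦ c^τ_{π,ρ,σ}, λ⁻ over the finite set {λ⁻ : b^λ_{λ⁻,T(ρ)} ≠ 0} given by hypothesis (2), and μ⁺ over the finite support of the B-coordinates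 of L_μ·L_π. -/
open TensorProduct

variable {k : Type*} [Field k] {H : Type*} [Ring H] [HopfAlgebra k H]
variable {P : Type*}

/-- The multiplication structure constant `b^ν_{λ,μ}`: the `L_ν`-coordinate of
`L_λ · L_μ`. -/
noncomputable def bC (B : Module.Basis P k H) (ν lam μ : P) : k :=
  B.repr (B lam * B μ) ν

/-- The coproduct structure constant `c^ν_{λ,μ}`: the `(L_λ ⊗ L_μ)`-coordinate
of `Δ(L_ν)` with respect to the basis of `H ⊗ H` induced by `B`. -/
noncomputable def cC (B : Module.Basis P k H) (ν lam μ : P) : k :=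
  (B.tensorProduct B).repr (Coalgebra.comul (B ν)) (lam, μ)

/-- The skew element `L_{ν/μ} := Σ_λ c^ν_{λ,μ} • L_λ`. -/
noncomputable def skewL (B : Module.Basis P k H) (ν μ : P) : H :=
  ∑ᶠ lam, cC B ν lam μ • B lam

/-- The triple coproduct constant `c^τ_{π,ρ,σ} := Σ_κ c^τ_{κ,σ} · c^κ_{π,ρ}`
(a finite sum). -/
noncomputable def cC3 (B : Module.Basis P k H) (τ π ρ σ : P) : k :=
  ∑ᶠ κ, cC B τ κ σ * cC B κ π ρ

/-!
Write `f ⇀ a = Σ a₁ f(a₂)`, so that `L_{ν/μ} = L_μ^* ⇀ L_ν`. In any Hopf algebra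
`Σ Δ(b₁)(1 ⊗ S(b₂)) = b ⊗ 1`, and multiplying by `Δ(a)` on the left gives
`(f ⇀ a) · b = Σ f(- · S(b₂)) ⇀ (a b₁)`. Take `a = L_μ`, `f = L_λ^*` and `b = L_{τ/σ}`, whose
coproduct is `Σ c^τ_{π,ρ,σ} L_π ⊗ L_ρ`. Then `S(L_ρ) = ±L_{T ρ}`, the functional
`L_λ^*(- · L_{T ρ})` is the finite sum `Σ_{λ⁻} b^λ_{λ⁻,T ρ} L_{λ⁻}^*`, and
`L_μ L_π = Σ_{μ⁺} b^{μ⁺}_{μ,π} L_{μ⁺}`; bilinearity of `⇀` gives the formula.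
-/

open TensorProduct Coalgebra LinearMap

namespace HopfAlgebra

variable {R A : Type*} [CommSemiring R] [Semiring A] [HopfAlgebra R A]

variable (R) in
/-- `hit R f a = Σ a₁ f(a₂)`, usually written `f ⇀ a`. -/
noncomputable def hit : (A →ₗ[R] R) →ₗ[R] A →ₗ[R] A :=
  lcomp R A comul ∘ₗ llcomp R (A ⊗[R] A) (A ⊗[R] R) A (TensorProduct.rid R A).toLinearMap ∘ₗ
    lTensorHom A

lemma hit_apply (f : A →ₗ[R] R) (a : A) :
    hit R f a = TensorProduct.rid R A (f.lTensor A (comul a)) := rfl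

variable (R) in
noncomputable def comulMulAntipode : A ⊗[R] A →ₗ[R] A ⊗[R] A :=
  mul' R (A ⊗[R] A) ∘ₗ
    TensorProduct.map comul (Algebra.TensorProduct.includeRight.toLinearMap ∘ₗ antipode R)

lemma comulMulAntipode_tmul (x y : A) :
    comulMulAntipode R (x ⊗ₜ y) = comul x * (1 ⊗ₜ antipode R y) := by
  simp [comulMulAntipode]

lemma comulMulAntipode_comul (b : A) : comulMulAntipode R (comul (R := R) b) = b ⊗ₜ 1 := by
  classical
  let rb := ℛ R b
  let r₁ := fun i => ℛ R (rb.left i)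
  let r₂ := fun i => ℛ R (rb.right i)
  have hcoassoc := congrArg ((mul' R A ∘ₗ (antipode R).lTensor A).lTensor A)
    (Coalgebra.sum_tmul_tmul_eq rb r₁ r₂)
  simp only [map_sum, lTensor_tmul, coe_comp, Function.comp_apply, mul'_apply] at hcoassoc
  calc comulMulAntipode R (comul b)
      = ∑ i ∈ rb.index, ∑ j ∈ (r₁ i).index,
          (r₁ i).left j ⊗ₜ ((r₁ i).right j * antipode R (rb.right i)) := by
        rw [← rb.eq, map_sum]
        refine Finset.sum_congr rfl fun i _ => ?_
        rw [comulMulAntipode_tmul, ← (r₁ i).eq, Finset.sum_mul]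
        simp [Algebra.TensorProduct.tmul_mul_tmul]
    _ = ∑ i ∈ rb.index, rb.left i ⊗ₜ (counit (R := R) (rb.right i) • (1 : A)) := by
        rw [hcoassoc]
        refine Finset.sum_congr rfl fun i _ => ?_
        rw [← tmul_sum, sum_mul_antipode_eq_smul]
    _ = b ⊗ₜ 1 := by
        simpa only [map_sum, lTensor_tmul, Algebra.linearMap_apply,
          Algebra.algebraMap_eq_smul_one, one_smul] using
          congrArg ((Algebra.linearMap R A).lTensor A) (sum_tmul_counit_eq rb)

lemma rid_lTensor_mul_tmul_one (f : A →ₗ[R] R) (Z : A ⊗[R] A) (b : A) :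
    TensorProduct.rid R A (f.lTensor A (Z * (b ⊗ₜ 1))) =
      TensorProduct.rid R A (f.lTensor A Z) * b := by
  induction Z using TensorProduct.induction_on with
  | zero => simp
  | tmul x y => simp [Algebra.TensorProduct.tmul_mul_tmul]
  | add Z W hZ hW => simp only [add_mul, map_add, hZ, hW]

lemma lTensor_mul_one_tmul (f : A →ₗ[R] R) (Z : A ⊗[R] A) (y : A) :
    f.lTensor A (Z * (1 ⊗ₜ y)) = (f ∘ₗ mulRight R y).lTensor A Z := by
  induction Z using TensorProduct.induction_on with
  | zero => simp
  | tmul x z => simp [Algebra.TensorProduct.tmul_mul_tmul]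
  | add Z W hZ hW => simp only [add_mul, map_add, hZ, hW]

variable (R) in
noncomputable def hitMul (f : A →ₗ[R] R) (a : A) : A ⊗[R] A →ₗ[R] A :=
  (TensorProduct.rid R A).toLinearMap ∘ₗ f.lTensor A ∘ₗ mulLeft R (comul a) ∘ₗ
    comulMulAntipode R

lemma hit_mul (f : A →ₗ[R] R) (a b : A) : hit R f a * b = hitMul R f a (comul b) := by
  simp [hitMul, comulMulAntipode_comul, rid_lTensor_mul_tmul_one, hit_apply]

lemma hitMul_tmul (f : A →ₗ[R] R) (a x y : A) :
    hitMul R f a (x ⊗ₜ y) = hit R (f ∘ₗ mulRight R (antipode R y)) (a * x) := by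
  simp [hitMul, comulMulAntipode_tmul, ← mul_assoc, ← Bialgebra.comul_mul, lTensor_mul_one_tmul,
    hit_apply]

end HopfAlgebra

open Function

section Finsum

variable {α β R M : Type*}

lemma Function.HasFiniteSupport.mul_prod [MulZeroClass R] {f : α → R} {g : β → R}
    (hf : HasFiniteSupport f) (hg : HasFiniteSupport g) :
    HasFiniteSupport fun p : α × β => f p.1 * g p.2 :=
  (hf.prod hg).subset fun _ hp => ⟨left_ne_zero_of_mul hp, right_ne_zero_of_mul hp⟩

variable [AddCommMonoid M]

lemma finsum_curry_of_finite_fibers (f : α × β → M) (hfst : (Prod.fst '' support f).Finite)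
    (hsnd : ∀ a, HasFiniteSupport fun b => f (a, b)) :
    ∑ᶠ p, f p = ∑ᶠ a, ∑ᶠ b, f (a, b) := by
  refine finsum_curry f (Set.Finite.of_finite_fibers Prod.fst hfst fun a _ => ?_)
  refine ((hsnd a).image (Prod.mk a)).subset ?_
  rintro ⟨a', b⟩ ⟨hab, rfl⟩
  exact ⟨b, hab, rfl⟩

lemma finsum_smul_finsum [Semiring R] [Module R M] {c : α → R} {g : α → β → M}
    (hc : HasFiniteSupport c) (hg : ∀ a, HasFiniteSupport (g a)) :
    ∑ᶠ a, c a • ∑ᶠ b, g a b = ∑ᶠ p : α × β, c p.1 • g p.1 p.2 := by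
  rw [finsum_curry_of_finite_fibers]
  · exact finsum_congr fun a => smul_finsum' (c a) (hg a)
  · refine hc.subset ?_
    rintro _ ⟨p, hp, rfl⟩
    exact left_ne_zero_of_smul hp
  · exact fun a => (hg a).fun_smul_right _

end Finsum

lemma LinearMap.map_finsum_finsum {R M N Q ι κ : Type*} [CommSemiring R] [AddCommMonoid M]
    [Module R M] [AddCommMonoid N] [Module R N] [AddCommMonoid Q] [Module R Q]
    (β : M →ₗ[R] N →ₗ[R] Q) {f : ι → M} {g : κ → N}
    (hf : HasFiniteSupport f) (hg : HasFiniteSupport g) :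
    β (∑ᶠ i, f i) (∑ᶠ j, g j) = ∑ᶠ p : ι × κ, β (f p.1) (g p.2) := by
  calc β (∑ᶠ i, f i) (∑ᶠ j, g j)
      = β.flip (∑ᶠ j, g j) (∑ᶠ i, f i) := rfl
    _ = ∑ᶠ i, ∑ᶠ j, β (f i) (g j) :=
        (map_finsum (β.flip (∑ᶠ j, g j)) hf).trans (finsum_congr fun i => map_finsum (β (f i)) hg)
    _ = ∑ᶠ p : ι × κ, β (f p.1) (g p.2) := by
        refine (finsum_curry (fun p : ι × κ => β (f p.1) (g p.2))
          ((hf.prod hg).subset fun p hp => ⟨fun h => hp ?_, fun h => hp ?_⟩)).symm <;>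
        simp [h]

namespace Module.Basis

variable {ι R M N : Type*} [CommSemiring R] [AddCommMonoid M] [Module R M]
  [AddCommMonoid N] [Module R N] (b : Basis ι R M)

lemma finsum_repr_smul (x : M) : ∑ᶠ i, b.repr x i • b i = x := by
  rw [finsum_eq_sum_of_support_subset _ (s := (b.repr x).support) fun i hi => ?_]
  · conv_rhs => rw [← b.linearCombination_repr x]
    rfl
  · exact Finsupp.mem_support_iff.mpr (left_ne_zero_of_smul hi)

lemma map_eq_finsum_repr_smul (φ : M →ₗ[R] N) (x : M) :
    φ x = ∑ᶠ i, b.repr x i • φ (b i) := by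
  conv_lhs => rw [← b.finsum_repr_smul x]
  rw [map_finsum φ ((b.repr x).hasFiniteSupport.fun_smul_left _)]
  simp_rw [map_smul]

lemma finsum_apply_smul_coord (g : M →ₗ[R] R) (hg : HasFiniteSupport fun i => g (b i)) :
    ∑ᶠ i, g (b i) • b.coord i = g := by
  classical
  refine b.ext fun j => ?_
  refine (map_finsum (LinearMap.applyₗ (R := R) (b j)) (hg.fun_smul_left _)).trans ?_
  simp only [applyₗ_apply_apply, LinearMap.smul_apply, coord_apply, repr_self,
    Finsupp.single_apply, smul_eq_mul, mul_ite, mul_one, mul_zero]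
  rw [finsum_eq_single _ j fun i hi => if_neg (Ne.symm hi), if_pos rfl]

end Module.Basis

section SkewElements

open HopfAlgebra

variable (B : Module.Basis P k H)

lemma hasFiniteSupport_cC (ν μ : P) : HasFiniteSupport fun lam => cC B ν lam μ :=
  (((B.tensorProduct B).repr (comul (B ν))).hasFiniteSupport.image Prod.fst).subset
    fun lam h => ⟨(lam, μ), h, rfl⟩

lemma repr_skewL (ν μ lam : P) : B.repr (skewL B ν μ) lam = cC B ν lam μ := by
  classical
  refine (map_finsum (Finsupp.lapply lam ∘ₗ B.repr.toLinearMap)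
    ((hasFiniteSupport_cC B ν μ).fun_smul_left _)).trans ?_
  simp only [coe_comp, LinearEquiv.coe_coe, Function.comp_apply, map_smul, Finsupp.lapply_apply,
    Module.Basis.repr_self, Finsupp.single_apply, smul_eq_mul, mul_ite, mul_one, mul_zero]
  rw [finsum_eq_single _ lam fun i hi => if_neg hi, if_pos rfl]

lemma repr_rid_lTensor_coord (μ lam : P) (Z : H ⊗[k] H) :
    B.repr (TensorProduct.rid k H ((B.coord μ).lTensor H Z)) lam =
      (B.tensorProduct B).repr Z (lam, μ) := by
  induction Z using TensorProduct.induction_on with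
  | zero => simp
  | tmul x y => simp [mul_comm]
  | add Z W hZ hW => simp [hZ, hW]

lemma hit_coord_eq_skewL (ν μ : P) : hit k (B.coord μ) (B ν) = skewL B ν μ :=
  B.ext_elem fun lam => by rw [hit_apply, repr_rid_lTensor_coord, repr_skewL]; rfl

lemma repr_comul_skewL (τ σ π ρ : P) :
    (B.tensorProduct B).repr (comul (skewL B τ σ)) (π, ρ) = cC3 B τ π ρ σ := by
  refine (B.map_eq_finsum_repr_smul
    (Finsupp.lapply (π, ρ) ∘ₗ (B.tensorProduct B).repr.toLinearMap ∘ₗ comul) _).trans ?_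
  exact finsum_congr fun κ => by rw [repr_skewL]; rfl

lemma hasFiniteSupport_cC3 (τ σ : P) : HasFiniteSupport fun p : P × P => cC3 B τ p.1 p.2 σ := by
  simpa only [← repr_comul_skewL] using
    ((B.tensorProduct B).repr (comul (skewL B τ σ))).hasFiniteSupport

lemma hit_coord_comp_mulRight_basis_mul {lam t : P}
    (hfin : HasFiniteSupport fun y => bC B lam y t) (μ π : P) :
    hit k (B.coord lam ∘ₗ mulRight k (B t)) (B μ * B π) =
      ∑ᶠ r : P × P, (bC B lam r.1 t * bC B r.2 μ π) • skewL B r.2 r.1 := by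
  rw [← B.finsum_apply_smul_coord (B.coord lam ∘ₗ mulRight k (B t)) hfin,
    ← B.finsum_repr_smul (B μ * B π)]
  refine ((hit k).map_finsum_finsum (hfin.fun_smul_left _)
    ((B.repr _).hasFiniteSupport.fun_smul_left _)).trans (finsum_congr fun r => ?_)
  rw [map_smul, map_smul, LinearMap.smul_apply, hit_coord_eq_skewL, smul_smul, mul_comm]
  rfl

lemma hitMul_coord_basis_tmul {lam ρ t : P} {c : k} (hρ : antipode k (B ρ) = c • B t)
    (hfin : HasFiniteSupport fun y => bC B lam y t) (μ π : P) :
    hitMul k (B.coord lam) (B μ) (B π ⊗ₜ B ρ) =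
      c • ∑ᶠ r : P × P, (bC B lam r.1 t * bC B r.2 μ π) • skewL B r.2 r.1 := by
  have hcoord : B.coord lam ∘ₗ mulRight k (c • B t) = c • (B.coord lam ∘ₗ mulRight k (B t)) := by
    ext; simp
  rw [hitMul_tmul, hρ, hcoord, map_smul, LinearMap.smul_apply,
    hit_coord_comp_mulRight_basis_mul B hfin]

end SkewElements

/-- **Algebraic Littlewood–Richardson formula.**  If the antipode acts on the
basis by `S(L_ρ) = (−1)^{e(ρ)} • L_{T(ρ)}`, and for each `ν, μ` the set
`{λ : b^ν_{λ,μ} ≠ 0}` is finite, then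
`L_{μ/λ} · L_{τ/σ}
  = Σ_{π,ρ,λ⁻,μ⁺} (−1)^{e(ρ)} · c^τ_{π,ρ,σ} · b^λ_{λ⁻,T(ρ)} · b^{μ⁺}_{μ,π}
      • L_{μ⁺/λ⁻}`,
a finitely supported sum over quadruples `(π, ρ, λ⁻, μ⁺)`. -/
theorem skewL_mul_skewL (B : Module.Basis P k H) (e : P → ℕ) (T : P → P)
    (hS : ∀ ρ : P,
      HopfAlgebra.antipode (R := k) (B ρ) = ((-1 : k) ^ e ρ) • B (T ρ))
    (hb : ∀ ν μ : P, {lam : P | bC B ν lam μ ≠ 0}.Finite)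
    (lam μ σ τ : P) :
    skewL B μ lam * skewL B τ σ =
      ∑ᶠ q : P × P × P × P,
        (((-1 : k) ^ e q.2.1) * cC3 B τ q.1 q.2.1 σ
            * bC B lam q.2.2.1 (T q.2.1) * bC B q.2.2.2 μ q.1)
          • skewL B q.2.2.2 q.2.2.1 := by
  calc skewL B μ lam * skewL B τ σ
      = HopfAlgebra.hitMul k (B.coord lam) (B μ) (comul (skewL B τ σ)) := by
        rw [← hit_coord_eq_skewL, HopfAlgebra.hit_mul]
    _ = ∑ᶠ p : P × P,
          cC3 B τ p.1 p.2 σ • HopfAlgebra.hitMul k (B.coord lam) (B μ) (B p.1 ⊗ₜ B p.2) := by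
        rw [(B.tensorProduct B).map_eq_finsum_repr_smul]
        exact finsum_congr fun p => by
          rw [Module.Basis.tensorProduct_apply', ← repr_comul_skewL]
    _ = ∑ᶠ p : P × P, ((-1 : k) ^ e p.2 * cC3 B τ p.1 p.2 σ) •
          ∑ᶠ r : P × P, (bC B lam r.1 (T p.2) * bC B r.2 μ p.1) • skewL B r.2 r.1 :=
        finsum_congr fun p => by
          rw [hitMul_coord_basis_tmul B (hS p.2) (hb lam (T p.2)), smul_smul, mul_comm]
    _ = ∑ᶠ x : (P × P) × (P × P), ((-1 : k) ^ e x.1.2 * cC3 B τ x.1.1 x.1.2 σ) •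
          (bC B lam x.2.1 (T x.1.2) * bC B x.2.2 μ x.1.1) • skewL B x.2.2 x.2.1 :=
        finsum_smul_finsum ((hasFiniteSupport_cC3 B τ σ).mul_right _) fun p =>
          (HasFiniteSupport.mul_prod (hb lam (T p.2)) (B.repr _).hasFiniteSupport).fun_smul_left _
    _ = _ := by
        refine (finsum_congr fun x => ?_).trans (finsum_comp_equiv (Equiv.prodAssoc P P (P × P)))
        simp only [Equiv.prodAssoc_apply, smul_smul, mul_assoc]
end

section
/- (Algebraic Littlewood–Richardson formula, dual version.) Let k be a field, H a Hopf algebra over k with antipode S, and B = (L_λ)_{λ ∈ P} a k-basis of H with multiplication structure constants b^ν_{λ,μ} and coproduct structure constants c^ν_{λ,μ}. Assume: (1) there are functions e : P → ℕ and T : P → P with T an involution and e∘T = e, such that S(L_ρ) = (−1)^{e(ρ)}·L_{T(ρ)} for all ρ ∈ P; (2) for each ν, μ ∈ P the set {λ ∈ P : b^ν_{λ,μ} ≠ 0} is finite; and (3) for each μ, π ∈ P the set {μ⁺ ∈ P : c^{μ⁺}_{μ,π} ≠ 0} is finite. Then for all λ, μ, σ, τ ∈ P, the convolution product of skew functionals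 satisfies R_{μ/λ}·R_{τ/σ} = Σ_{π,ρ,λ⁻,μ⁺} (−1)^{e(ρ)}·b^τ_{π,ρ,σ}·c^λ_{λ⁻,T(ρ)}·c^{μ⁺}_{μ,π}·R_{μ⁺/λ⁻} as linear functionals on H, where the sum is over π, ρ, λ⁻, μ⁺ ∈ P and is finite: (π,ρ) ranges over the finite support of (π,ρ) ↦ b^τ_{π,ρ,σ} (finite by hypothesis (2)), λ⁻ over the finite support of λ⁻ ↦ c^λ_{λ⁻,T(ρ)}, and μ⁺ over the finite set given by hypothesis (3). -/
open TensorProduct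

variable {k : Type*} [Field k] {H : Type*} [Ring H] [HopfAlgebra k H]
variable {P : Type*}

/-- The convolution product of two functionals on `H`:
`(a · b)(h) := Σ a(h₁) · b(h₂)`. -/
noncomputable def conv (a b : H →ₗ[k] k) : H →ₗ[k] k :=
  LinearMap.mul' k k ∘ₗ TensorProduct.map a b ∘ₗ Coalgebra.comul

/-- The skew functional `R_{ν/μ}`, given by `R_{ν/μ}(g) := R_ν(g · L_μ)`. -/
noncomputable def skewR (B : Module.Basis P k H) (ν μ : P) : H →ₗ[k] k :=
  B.coord ν ∘ₗ LinearMap.mulRight k (B μ)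

/-- The triple product constant `b^τ_{π,ρ,σ} := Σ_κ b^κ_{π,ρ} · b^τ_{κ,σ}`
(a finite sum). -/
noncomputable def bC3 (B : Module.Basis P k H) (τ π ρ σ : P) : k :=
  ∑ᶠ κ, bC B κ π ρ * bC B τ κ σ

/-!
By coassociativity and the antipode axiom, `Σ Δ(a₁) · (1 ⊗ S(a₂)) = a ⊗ 1`, hence
`Δ(g) · (a ⊗ b) = Σ Δ(g a₁) · (1 ⊗ S(a₂) b)`. With `a = L_λ` and `b = L_σ` this rewrites
`(R_{μ/λ} · R_{τ/σ})(g)` as `Σ c^λ_{λ⁻,ρ'} (R_μ · R_τ(· S(L_{ρ'}) L_σ))(g L_{λ⁻})`.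
Substituting `ρ' = T ρ` turns `S(L_{ρ'})` into `(-1)^{e(ρ)} L_ρ`; it remains to expand
`R_τ(· L_ρ L_σ) = Σ_π b^τ_{π,ρ,σ} R_π` and `R_μ · R_π = Σ_{μ⁺} c^{μ⁺}_{μ,π} R_{μ⁺}`, each an
instance of `f = Σ_π f(L_π) R_π` for a functional `f` vanishing on all but finitely many `L_π`.
-/

open Coalgebra HopfAlgebra

namespace LinearMap

variable {R M N Q ι : Type*} [CommSemiring R] [AddCommMonoid M] [AddCommMonoid N]
  [AddCommMonoid Q] [Module R M] [Module R N] [Module R Q]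

lemma finsum_apply {f : ι → M →ₗ[R] N} (hf : f.HasFiniteSupport) (x : M) :
    (∑ᶠ i, f i) x = ∑ᶠ i, f i x :=
  map_finsum (applyₗ x) hf

lemma finsum_comp {f : ι → N →ₗ[R] Q} (hf : f.HasFiniteSupport) (g : M →ₗ[R] N) :
    (∑ᶠ i, f i) ∘ₗ g = ∑ᶠ i, f i ∘ₗ g :=
  map_finsum (lcomp R Q g) hf

lemma mulRight_smul {A : Type*} [Semiring A] [Algebra R A] (c : R) (a : A) :
    mulRight R (c • a) = c • mulRight R a := by
  ext x
  simp

end LinearMap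

lemma Module.Basis.finsum_dual_apply_smul_coord {R M ι : Type*} [CommSemiring R]
    [AddCommMonoid M] [Module R M] (b : Module.Basis ι R M) {f : M →ₗ[R] R}
    (hf : (fun i => f (b i)).HasFiniteSupport) : ∑ᶠ i, f (b i) • b.coord i = f := by
  refine b.ext fun j => ?_
  rw [LinearMap.finsum_apply (f := fun i => f (b i) • b.coord i) (hf.smul_left b.coord),
    finsum_eq_single _ j fun i hij => by simp [hij]]
  simp

lemma finsum_curry₄ {α β γ δ M : Type*} [AddCommMonoid M] (f : α × β × γ × δ → M)
    (hf : f.HasFiniteSupport) : ∑ᶠ q, f q = ∑ᶠ (a) (b) (c) (d), f (a, b, c, d) := by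
  rw [finsum_curry f hf]
  exact finsum_congr fun a => finsum_curry₃ _ (hf.comp_of_injective (Prod.mk_right_injective a))

namespace HopfAlgebra

variable {R A : Type*} [CommSemiring R] [Semiring A] [HopfAlgebra R A]

lemma sum_comul_mul_one_tmul_antipode {a : A} {ι : Type*} (r : Repr R a ι) :
    ∑ i ∈ r.index, comul (R := R) (r.left i) * (1 ⊗ₜ[R] antipode R (r.right i)) =
      a ⊗ₜ[R] 1 := by
  classical
  let r₁ i := ℛ R (r.left i)
  let r₂ i := ℛ R (r.right i)
  have coassoc := congrArg ((LinearMap.mul' R A ∘ₗ (antipode R).lTensor A).lTensor A)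
    (sum_tmul_tmul_eq r r₁ r₂)
  simp only [map_sum, LinearMap.lTensor_tmul, LinearMap.coe_comp, Function.comp_apply,
    LinearMap.mul'_apply, ← TensorProduct.tmul_sum] at coassoc
  calc _ = ∑ i ∈ r.index, ∑ j ∈ (r₁ i).index,
          (r₁ i).left j ⊗ₜ[R] ((r₁ i).right j * antipode R (r.right i)) := by
        refine Finset.sum_congr rfl fun i _ => ?_
        simp_rw [← (r₁ i).eq, Finset.sum_mul, Algebra.TensorProduct.tmul_mul_tmul, mul_one]
    _ = ∑ i ∈ r.index, r.left i ⊗ₜ[R] algebraMap R A (counit (r.right i)) := by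
        simp only [coassoc, sum_mul_antipode_eq_algebraMap_counit]
    _ = a ⊗ₜ[R] 1 := by
        simpa only [map_sum, LinearMap.lTensor_tmul, Algebra.linearMap_apply, map_one] using
          congrArg ((Algebra.linearMap R A).lTensor A) (sum_tmul_counit_eq r)

lemma comul_mul_tmul {a : A} {ι : Type*} (r : Repr R a ι) (g b : A) :
    comul (R := R) g * (a ⊗ₜ[R] b) =
      ∑ i ∈ r.index, comul (R := R) (g * r.left i) * (1 ⊗ₜ[R] (antipode R (r.right i) * b)) := by
  calc comul (R := R) g * (a ⊗ₜ[R] b) = comul g * ((a ⊗ₜ[R] 1) * (1 ⊗ₜ[R] b)) := by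
        rw [Algebra.TensorProduct.tmul_mul_tmul, mul_one, one_mul]
    _ = _ := by
        rw [← sum_comul_mul_one_tmul_antipode r, Finset.sum_mul, Finset.mul_sum]
        refine Finset.sum_congr rfl fun i _ => ?_
        rw [Bialgebra.comul_mul, mul_assoc, mul_assoc, Algebra.TensorProduct.tmul_mul_tmul,
          one_mul]

end HopfAlgebra

lemma conv_apply (a b : H →ₗ[k] k) (x : H) :
    conv a b x = LinearMap.mul' k k (TensorProduct.map a b (comul x)) := rfl

lemma conv_comp_mulRight_comp_mulRight {a : H} {ι : Type*} (r : Repr k a ι)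
    (f h : H →ₗ[k] k) (b : H) :
    conv (f ∘ₗ LinearMap.mulRight k a) (h ∘ₗ LinearMap.mulRight k b) =
      ∑ i ∈ r.index, conv f (h ∘ₗ LinearMap.mulRight k (antipode k (r.right i) * b)) ∘ₗ
        LinearMap.mulRight k (r.left i) := by
  ext g
  rw [conv_apply, TensorProduct.map_comp, LinearMap.comp_apply, ← LinearMap.mulRight_tmul,
    LinearMap.mulRight_apply, comul_mul_tmul r, map_sum, map_sum, LinearMap.sum_apply]
  refine Finset.sum_congr rfl fun i _ => ?_
  rw [← LinearMap.mulRight_apply (R := k), LinearMap.mulRight_tmul, LinearMap.mulRight_one]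
  exact congrArg _ (LinearMap.map_lTensor _ _ _ _ _)

lemma conv_smul_right (a b : H →ₗ[k] k) (c : k) : conv a (c • b) = c • conv a b := by
  ext x
  simp [conv_apply, TensorProduct.map_smul_right]

lemma conv_finsum_right {ι : Type*} (a : H →ₗ[k] k) {f : ι → H →ₗ[k] k}
    (hf : f.HasFiniteSupport) : conv a (∑ᶠ i, f i) = ∑ᶠ i, conv a (f i) :=
  map_finsum (AddMonoidHom.mk' (conv a) fun b₁ b₂ => by
    ext x
    simp [conv_apply, TensorProduct.map_add_right]) hf

section StructureConstants

variable (B : Module.Basis P k H)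

noncomputable def Module.Basis.comulRepr (a : H) : Repr k a (P × P) where
  index := ((B.tensorProduct B).repr (comul a)).support
  left p := (B.tensorProduct B).repr (comul a) p • B p.1
  right p := B p.2
  eq := by
    conv_rhs => rw [← (B.tensorProduct B).linearCombination_repr (comul a)]
    rw [Finsupp.linearCombination_apply, Finsupp.sum]
    exact Finset.sum_congr rfl fun p _ => by
      rw [Module.Basis.tensorProduct_apply, TensorProduct.smul_tmul']

lemma coord_mul_mul_eq_bC3 (τ π ρ σ : P) : B.coord τ (B π * B ρ * B σ) = bC3 B τ π ρ σ := by
  classical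
  rw [bC3, finsum_eq_sum_of_support_subset (fun κ => bC B κ π ρ * bC B τ κ σ)
    (s := (B.repr (B π * B ρ)).support)
    fun κ hκ => Finsupp.mem_support_iff.2 (left_ne_zero_of_mul hκ)]
  conv_lhs => rw [← B.linearCombination_repr (B π * B ρ)]
  simp only [Finsupp.linearCombination_apply, Finsupp.sum, Finset.sum_mul, map_sum,
    smul_mul_assoc, map_smul, smul_eq_mul]
  rfl

lemma conv_coord_coord_apply (μ π : P) (x : H) :
    conv (B.coord μ) (B.coord π) x = (B.tensorProduct B).repr (comul x) (μ, π) := by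
  have : LinearMap.mul' k k ∘ₗ TensorProduct.map (B.coord μ) (B.coord π) =
      (B.tensorProduct B).coord (μ, π) :=
    TensorProduct.ext' fun x y => by
      simp [Module.Basis.tensorProduct_repr_tmul_apply, mul_comm]
  exact LinearMap.congr_fun this (comul x)

variable {B}

lemma finite_bC3_ne_zero (hb : ∀ ν μ : P, {lam : P | bC B ν lam μ ≠ 0}.Finite) (τ ρ σ : P) :
    {π : P | bC3 B τ π ρ σ ≠ 0}.Finite := by
  refine ((hb τ σ).biUnion fun κ _ => hb κ ρ).subset fun π hπ => ?_
  obtain ⟨κ, hκ⟩ : ∃ κ, bC B κ π ρ * bC B τ κ σ ≠ 0 := by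
    by_contra! h
    exact hπ (finsum_eq_zero_of_forall_eq_zero h)
  exact Set.mem_biUnion (right_ne_zero_of_mul hκ) (left_ne_zero_of_mul hκ)

lemma conv_coord_coord_eq_finsum (hc : ∀ μ π : P, {μp : P | cC B μp μ π ≠ 0}.Finite) (μ π : P) :
    conv (B.coord μ) (B.coord π) = ∑ᶠ ν, cC B ν μ π • B.coord ν := by
  have hcoeff (ν : P) : conv (B.coord μ) (B.coord π) (B ν) = cC B ν μ π :=
    conv_coord_coord_apply B μ π (B ν)
  refine (B.finsum_dual_apply_smul_coord ?_).symm.trans (finsum_congr fun ν => by rw [hcoeff])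
  simp only [hcoeff]
  exact hc μ π

lemma coord_comp_mulRight_mul_eq_finsum (hb : ∀ ν μ : P, {lam : P | bC B ν lam μ ≠ 0}.Finite)
    (τ ρ σ : P) :
    B.coord τ ∘ₗ LinearMap.mulRight k (B ρ * B σ) = ∑ᶠ π, bC3 B τ π ρ σ • B.coord π := by
  have hcoeff (π : P) :
      (B.coord τ ∘ₗ LinearMap.mulRight k (B ρ * B σ)) (B π) = bC3 B τ π ρ σ := by
    rw [LinearMap.comp_apply, LinearMap.mulRight_apply, ← mul_assoc, coord_mul_mul_eq_bC3]
  refine (B.finsum_dual_apply_smul_coord ?_).symm.trans (finsum_congr fun π => by rw [hcoeff])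
  simp only [hcoeff]
  exact finite_bC3_ne_zero hb τ ρ σ

end StructureConstants

section SkewFunctionals

variable {B : Module.Basis P k H}

lemma conv_coord_comp_mulRight_mul_comp_mulRight_eq_finsum
    (hb : ∀ ν μ : P, {lam : P | bC B ν lam μ ≠ 0}.Finite)
    (hc : ∀ μ π : P, {μp : P | cC B μp μ π ≠ 0}.Finite) (μ τ ρ σ l : P) :
    conv (B.coord μ) (B.coord τ ∘ₗ LinearMap.mulRight k (B ρ * B σ)) ∘ₗ
        LinearMap.mulRight k (B l) =
      ∑ᶠ π, bC3 B τ π ρ σ • ∑ᶠ ν, cC B ν μ π • skewR B ν l := by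
  have hb3 : (fun π => bC3 B τ π ρ σ).HasFiniteSupport := finite_bC3_ne_zero hb τ ρ σ
  rw [coord_comp_mulRight_mul_eq_finsum hb,
    conv_finsum_right _ (f := fun π => bC3 B τ π ρ σ • B.coord π) (hb3.smul_left _)]
  simp_rw [conv_smul_right]
  rw [LinearMap.finsum_comp (f := fun π => bC3 B τ π ρ σ • conv (B.coord μ) (B.coord π))
    (hb3.smul_left _)]
  refine finsum_congr fun π => ?_
  rw [LinearMap.smul_comp, conv_coord_coord_eq_finsum hc,
    LinearMap.finsum_comp (f := fun ν => cC B ν μ π • B.coord ν)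
      (Function.HasFiniteSupport.smul_left (hc μ π) _)]
  simp_rw [LinearMap.smul_comp]
  rfl

lemma skewR_conv_skewR_eq_finsum_antipode (lam μ σ τ : P) :
    conv (skewR B μ lam) (skewR B τ σ) =
      ∑ᶠ (l) (ρ), cC B lam l ρ • conv (B.coord μ)
        (B.coord τ ∘ₗ LinearMap.mulRight k (antipode k (B ρ) * B σ)) ∘ₗ
          LinearMap.mulRight k (B l) := by
  set c := (B.tensorProduct B).repr (comul (B lam))
  let F (p : P × P) : H →ₗ[k] k := cC B lam p.1 p.2 • conv (B.coord μ)
      (B.coord τ ∘ₗ LinearMap.mulRight k (antipode k (B p.2) * B σ)) ∘ₗ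
        LinearMap.mulRight k (B p.1)
  have hsupp : F.support ⊆ Function.support c :=
    Function.support_smul_subset_left (fun p : P × P => c p) _
  rw [skewR, skewR, conv_comp_mulRight_comp_mulRight (B.comulRepr (B lam)),
    ← finsum_curry F (c.hasFiniteSupport.subset hsupp),
    finsum_eq_sum_of_support_subset F (hsupp.trans (Finsupp.fun_support_eq c).subset)]
  refine Finset.sum_congr rfl fun p _ => ?_
  simp only [Module.Basis.comulRepr, LinearMap.mulRight_smul, LinearMap.comp_smul]
  rfl

lemma finite_skewR_conv_skewR_coeff_ne_zero {e : P → ℕ} {T : P → P}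
    (hT : Function.Involutive T) (hb : ∀ ν μ : P, {lam : P | bC B ν lam μ ≠ 0}.Finite)
    (hc : ∀ μ π : P, {μp : P | cC B μp μ π ≠ 0}.Finite) (lam μ σ τ : P) :
    {q : P × P × P × P | (-1 : k) ^ e q.2.1 * bC3 B τ q.1 q.2.1 σ
        * cC B lam q.2.2.1 (T q.2.1) * cC B q.2.2.2 μ q.1 ≠ 0}.Finite := by
  have hΔ : {p : P × P | cC B lam p.1 p.2 ≠ 0}.Finite :=
    ((B.tensorProduct B).repr (comul (B lam))).hasFiniteSupport
  refine (hΔ.biUnion fun p _ => (finite_bC3_ne_zero hb τ (T p.2) σ).biUnion fun π _ =>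
    (hc μ π).image fun ν => (π, T p.2, p.1, ν)).subset ?_
  rintro ⟨π, ρ, l, ν⟩ hq
  simp only [Set.mem_ofPred_eq, mul_ne_zero_iff] at hq
  obtain ⟨⟨⟨-, hbπ⟩, hcl⟩, hcν⟩ := hq
  simp only [Set.mem_iUnion, Set.mem_image]
  exact ⟨(l, T ρ), hcl, π, by rwa [hT], ν, hcν, by rw [hT]⟩

end SkewFunctionals

/-- **Algebraic Littlewood–Richardson formula, dual version.**  If the
antipode acts on the basis by `S(L_ρ) = (−1)^{e(ρ)} • L_{T(ρ)}` with `T` an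
involution and `e ∘ T = e`, for each `ν, μ` the set `{λ : b^ν_{λ,μ} ≠ 0}` is
finite, and for each `μ, π` the set `{μ⁺ : c^{μ⁺}_{μ,π} ≠ 0}` is finite, then
`R_{μ/λ} · R_{τ/σ}
  = Σ_{π,ρ,λ⁻,μ⁺} (−1)^{e(ρ)} · b^τ_{π,ρ,σ} · c^λ_{λ⁻,T(ρ)} · c^{μ⁺}_{μ,π}
      • R_{μ⁺/λ⁻}`
as linear functionals on `H`, a finitely supported sum over quadruples
`(π, ρ, λ⁻, μ⁺)`. -/
theorem skewR_conv_skewR (B : Module.Basis P k H) (e : P → ℕ) (T : P → P)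
    (hT : Function.Involutive T) (heT : ∀ ρ : P, e (T ρ) = e ρ)
    (hS : ∀ ρ : P,
      HopfAlgebra.antipode (R := k) (B ρ) = ((-1 : k) ^ e ρ) • B (T ρ))
    (hb : ∀ ν μ : P, {lam : P | bC B ν lam μ ≠ 0}.Finite)
    (hc : ∀ μ π : P, {μp : P | cC B μp μ π ≠ 0}.Finite)
    (lam μ σ τ : P) :
    conv (skewR B μ lam) (skewR B τ σ) =
      ∑ᶠ q : P × P × P × P,
        (((-1 : k) ^ e q.2.1) * bC3 B τ q.1 q.2.1 σ
            * cC B lam q.2.2.1 (T q.2.1) * cC B q.2.2.2 μ q.1)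
          • skewR B q.2.2.2 q.2.2.1 := by
  have hST (ρ : P) : antipode k (B (T ρ)) = (-1 : k) ^ e ρ • B ρ := by rw [hS, heT, hT]
  let swap : P × P × P × P ≃ P × P × P × P :=
    ⟨fun q => (q.2.2.1, q.2.1, q.1, q.2.2.2), fun q => (q.2.2.1, q.2.1, q.1, q.2.2.2),
      fun _ => rfl, fun _ => rfl⟩
  have hfin := (Function.HasFiniteSupport.smul_left
    (finite_skewR_conv_skewR_coeff_ne_zero (e := e) hT hb hc lam μ σ τ)
    fun q => skewR B q.2.2.2 q.2.2.1).comp_of_injective swap.injective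
  calc conv (skewR B μ lam) (skewR B τ σ)
      = ∑ᶠ (l) (ρ), cC B lam l (T ρ) • conv (B.coord μ)
          (B.coord τ ∘ₗ LinearMap.mulRight k (antipode k (B (T ρ)) * B σ)) ∘ₗ
            LinearMap.mulRight k (B l) := by
        rw [skewR_conv_skewR_eq_finsum_antipode]
        exact finsum_congr fun l => (finsum_comp_equiv hT.toPerm).symm
    _ = ∑ᶠ (l) (ρ) (π) (ν), ((-1 : k) ^ e ρ * bC3 B τ π ρ σ * cC B lam l (T ρ) * cC B ν μ π)
          • skewR B ν l := by
        refine finsum_congr fun l => finsum_congr fun ρ => ?_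
        rw [hST, smul_mul_assoc, LinearMap.mulRight_smul, LinearMap.comp_smul, conv_smul_right,
          LinearMap.smul_comp, conv_coord_comp_mulRight_mul_comp_mulRight_eq_finsum hb hc]
        simp_rw [smul_finsum, smul_smul]
        refine finsum_congr fun π => finsum_congr fun ν => ?_
        congr 1
        ring
    _ = _ := by
        rw [← finsum_comp_equiv swap]
        exact (finsum_curry₄ _ hfin).symm
end
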